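/- Let u : X → ℝ be Lipschitz on a geodesic metric space X, let x ∈ X with Lip u(x) > 0 (where Lip u(x) = limsup_{y→x} |u(y)-u(x)|/d(y,x)), and suppose sup_{y∈B(x,r₁)} |Lip u(y) − Lip u(x)| ≤ (1/2)·Lip u(x) for some r₁ > 0. Then there exist r₂ ∈ (0, r₁/2] and y ∈ X with d(x,y) = r₂ such that sup_{x'∈B(x,r₂)} |u(x')−u(x)|/d(x,x') ≤ (3/2)·Lip u(x) and |u(y)−u(x)|/r₂ ≥ (2/3)·Lip u(x). -/
import Mathlib


open Metric

/-- The pointwise upper Lipschitz constant `Lip u (x)`, defined as the infimum over `r > 0`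
of the supremum of difference quotients over the punctured ball `B(x,r) \ {x}`. -/
noncomputable def lipAt {X : Type*} [MetricSpace X] (u : X → ℝ) (x : X) : ℝ :=
  ⨅ r : {r : ℝ // 0 < r},
    sSup ((fun y => |u y - u x| / dist y x) '' (ball x r.1 \ {x}))

theorem stmt_5 {X : Type*} [MetricSpace X]
    (hgeo : ∀ x y : X, ∃ f : ℝ → X, f 0 = x ∧ f (dist x y) = y ∧
      ∀ s ∈ Set.Icc 0 (dist x y), ∀ t ∈ Set.Icc 0 (dist x y), dist (f s) (f t) = |s - t|)
    (u : X → ℝ) (L : NNReal) (hL : LipschitzWith L u)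
    (x : X) (hpos : 0 < lipAt u x) (r₁ : ℝ) (hr₁ : 0 < r₁)
    (hunif : ∀ y ∈ ball x r₁, |lipAt u y - lipAt u x| ≤ (1 / 2) * lipAt u x) :
    ∃ r₂, 0 < r₂ ∧ r₂ ≤ r₁ / 2 ∧ ∃ y : X, dist x y = r₂ ∧
      (∀ x' ∈ ball x r₂, |u x' - u x| / dist x x' ≤ (3 / 2) * lipAt u x) ∧
      (2 / 3) * lipAt u x ≤ |u y - u x| / r₂ := by
  classical
  set Q : X → ℝ := fun y => |u y - u x| / dist y x with hQ
  have hQnn : ∀ y, 0 ≤ Q y := fun y => div_nonneg (abs_nonneg _) dist_nonneg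
  have hbdd : ∀ r : ℝ, BddAbove (Q '' (ball x r \ {x})) := by
    intro r
    refine ⟨L, ?_⟩
    rintro q ⟨y, ⟨hy, hyx⟩, rfl⟩
    have hd : 0 < dist y x := dist_pos.mpr hyx
    rw [hQ]
    simp only
    rw [div_le_iff₀ hd]
    calc |u y - u x| = dist (u y) (u x) := (Real.dist_eq _ _).symm
      _ ≤ L * dist y x := hL.dist_le_mul y x
  have hbddb : BddBelow (Set.range fun r : {r : ℝ // 0 < r} =>
      sSup (Q '' (ball x r.1 \ {x}))) := by
    refine ⟨0, ?_⟩
    rintro q ⟨r, rfl⟩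
    rcases Set.eq_empty_or_nonempty (Q '' (ball x r.1 \ {x})) with h | h
    · simp [h, Real.sSup_empty]
    · obtain ⟨q0, hq0⟩ := h
      have h1 : q0 ≤ sSup (Q '' (ball x r.1 \ {x})) := le_csSup (hbdd r.1) hq0
      obtain ⟨y, _, rfl⟩ := hq0
      exact le_trans (hQnn y) h1
  have hle : ∀ r : {r : ℝ // 0 < r}, lipAt u x ≤ sSup (Q '' (ball x r.1 \ {x})) := by
    intro r
    exact ciInf_le hbddb r
  have hne : ∀ r : ℝ, 0 < r → (ball x r \ {x}).Nonempty := by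
    intro r hr
    by_contra h
    have he : (ball x r \ {x}) = ∅ := Set.not_nonempty_iff_eq_empty.mp h
    have h0 : sSup (Q '' (ball x r \ {x})) = 0 := by simp [he, Real.sSup_empty]
    have := hle ⟨r, hr⟩
    rw [h0] at this
    linarith
  have hlt : lipAt u x < (3 / 2) * lipAt u x := by linarith
  have hlt' : ⨅ r : {r : ℝ // 0 < r}, sSup (Q '' (ball x r.1 \ {x})) <
      (3 / 2) * lipAt u x := hlt
  obtain ⟨r, hrlt⟩ := exists_lt_of_ciInf_lt hlt'
  set r'' : ℝ := min r.1 (r₁ / 2) with hr''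
  have hr''pos : 0 < r'' := lt_min r.2 (by linarith)
  have hsub : ball x r'' \ {x} ⊆ ball x r.1 \ {x} :=
    Set.diff_subset_diff_left (ball_subset_ball (min_le_left _ _))
  have hsup'' : sSup (Q '' (ball x r'' \ {x})) < (3 / 2) * lipAt u x := by
    refine lt_of_le_of_lt ?_ hrlt
    exact csSup_le_csSup (hbdd r.1) ((hne r'' hr''pos).image Q) (Set.image_mono hsub)
  have hge : lipAt u x ≤ sSup (Q '' (ball x r'' \ {x})) := hle ⟨r'', hr''pos⟩
  have hlt2 : (2 / 3) * lipAt u x < sSup (Q '' (ball x r'' \ {x})) := by linarith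
  obtain ⟨q, hqmem, hq⟩ := exists_lt_of_lt_csSup ((hne r'' hr''pos).image Q) hlt2
  obtain ⟨z, ⟨hzball, hzx⟩, rfl⟩ := hqmem
  have hzx' : z ≠ x := hzx
  have hdz : 0 < dist x z := dist_pos.mpr (Ne.symm hzx')
  have hdzlt : dist x z < r'' := by rw [dist_comm]; exact mem_ball.mp hzball
  refine ⟨dist x z, hdz, ?_, z, rfl, ?_, ?_⟩
  · have : r'' ≤ r₁ / 2 := min_le_right _ _
    linarith
  · intro x' hx'
    by_cases hx'x : x' = x
    · subst hx'x
      simp only [sub_self, abs_zero, dist_self, zero_div]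
      positivity
    · have hx'mem : x' ∈ ball x r'' \ {x} := by
        refine ⟨?_, hx'x⟩
        exact lt_trans (mem_ball.mp hx') hdzlt
      have : Q x' ≤ sSup (Q '' (ball x r'' \ {x})) :=
        le_csSup (hbdd r'') (Set.mem_image_of_mem Q hx'mem)
      have hqx' : |u x' - u x| / dist x' x ≤ sSup (Q '' (ball x r'' \ {x})) := this
      rw [dist_comm x x']
      linarith
  · have : Q z = |u z - u x| / dist z x := rfl
    rw [dist_comm x z]
    rw [this] at hq
    linarith
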